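/- Uniform penalty error bound for small switching cost: suppose F is locally Lipschitz continuous and the penalty function is π(y) = max(y, 0). For c > 0 and ρ > 0, let u^c be the solution of the QVI with switching cost c and let u^{c,ρ} be the solution of the penalized equation with penalty parameter ρ and switching cost c. Then there exists a constant C₁ > 0, independent of c and ρ, such that 0 ≤ u^c − u^{c,ρ} ≤ C₁(1/ρ + cρ) componentwise for all c > 0 and ρ > 0. -/

import Mathlib

open Filter Topology

noncomputable section

/-- A monotone system with constant `γ`: whenever `u i l - v i l` is the (nonnegative)
maximum of all differences, `F u i l - F v i l ≥ γ (u i l - v i l)`. -/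
def IsMonotoneSystem {N d : ℕ} (γ : ℝ)
    (F : (Fin d → Fin N → ℝ) → Fin d → Fin N → ℝ) : Prop :=
  ∀ u v : Fin d → Fin N → ℝ, ∀ i : Fin d, ∀ l : Fin N,
    (∀ (j : Fin d) (k : Fin N), u j k - v j k ≤ u i l - v i l) →
    0 ≤ u i l - v i l →
    γ * (u i l - v i l) ≤ F u i l - F v i l

/-- The intervention operator `(M_i u)_l = max_{j ≠ i} (u j l - c)`. -/
def Mop {N d : ℕ} (c : ℝ) (u : Fin d → Fin N → ℝ) (i : Fin d) (l : Fin N) : ℝ :=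
  ⨆ j : {j : Fin d // j ≠ i}, (u j l - c)

/-- The sup-norm `‖u‖ = max_{i,l} |u i l|`. -/
def supNorm {N d : ℕ} (u : Fin d → Fin N → ℝ) : ℝ :=
  ⨆ p : Fin d × Fin N, |u p.1 p.2|

/-- A penalty function: continuous, non-decreasing, vanishing on `(-∞,0]` and
positive on `(0,∞)`. -/
def IsPenaltyFunction (π : ℝ → ℝ) : Prop :=
  Continuous π ∧ Monotone π ∧ (∀ y : ℝ, y ≤ 0 → π y = 0) ∧ (∀ y : ℝ, 0 < y → 0 < π y)

/-- A concave system: each `F_i` is concave (componentwise). -/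
def IsConcaveSystem {N d : ℕ}
    (F : (Fin d → Fin N → ℝ) → Fin d → Fin N → ℝ) : Prop :=
  ∀ (i : Fin d) (u v : Fin d → Fin N → ℝ) (θ : ℝ), 0 ≤ θ → θ ≤ 1 → ∀ l : Fin N,
    θ * F u i l + (1 - θ) * F v i l ≤ F (fun j k => θ * u j k + (1 - θ) * v j k) i l

/-!
Write `K = ‖F 0‖ / γ`. The maximum principle for monotone systems gives `|u^c|, |u^{c,ρ}| ≤ K`
and `u^{c,ρ} ≤ u^c` (at a positive maximum of `u^{c,ρ} - u^c` the penalty vanishes). The penalized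
equation bounds `ρ (v_j - c - v_i)⁺` by `F(v)_i`, so the regimes of `v = u^{c,ρ}` differ by at most
`D = c + K₁/ρ`, with `K₁` a bound of `F` on the ball of radius `K`. For each `i`, the vector equal
to `v_i + D + a` in every regime, `a = 2 L D / γ` with `L` a Lipschitz constant of `F` near that
ball, is a supersolution of the QVI, hence bounds `u^c` from above. Finally `c ≤ (1/ρ + c ρ)^2 / 4`, so
`D = O(1/ρ + c ρ)` when `1/ρ + c ρ` is small, and otherwise `u^c - u^{c,ρ} ≤ 2 K` suffices.
-/

open Metric NNReal

section SupNorm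

variable {ι κ : Type*} [Fintype ι] [Fintype κ]

lemma abs_apply_le_norm (u : ι → κ → ℝ) (i : ι) (l : κ) : |u i l| ≤ ‖u‖ :=
  (Real.norm_eq_abs _ ▸ norm_le_pi_norm (u i) l).trans (norm_le_pi_norm u i)

lemma norm_le_of_forall_abs_le {u : ι → κ → ℝ} {r : ℝ} (hr : 0 ≤ r) (h : ∀ i l, |u i l| ≤ r) :
    ‖u‖ ≤ r :=
  (pi_norm_le_iff_of_nonneg hr).2 fun i => (pi_norm_le_iff_of_nonneg hr).2 fun l => h i l

end SupNorm

variable {N d : ℕ}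

section Mop

variable {c : ℝ} {u : Fin d → Fin N → ℝ} {i : Fin d} {l : Fin N}

lemma le_Mop {j : Fin d} (hj : j ≠ i) : u j l - c ≤ Mop c u i l :=
  le_ciSup (f := fun j : {j : Fin d // j ≠ i} => u j l - c) (Set.finite_range _).bddAbove ⟨j, hj⟩

lemma exists_ne_Mop_eq [Nontrivial (Fin d)] : ∃ j, j ≠ i ∧ Mop c u i l = u j l - c := by
  obtain ⟨j, hj⟩ := exists_ne i
  have : Nonempty {j : Fin d // j ≠ i} := ⟨⟨j, hj⟩⟩
  obtain ⟨j, hmax⟩ := Finite.exists_max fun j : {j : Fin d // j ≠ i} => u j l - c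
  exact ⟨j, j.2, le_antisymm (ciSup_le hmax) (le_Mop j.2)⟩

end Mop

def IsQVISolution (F : (Fin d → Fin N → ℝ) → Fin d → Fin N → ℝ) (c : ℝ)
    (u : Fin d → Fin N → ℝ) : Prop :=
  ∀ i l, min (F u i l) (u i l - Mop c u i l) = 0

def IsPenalizedSolution (F : (Fin d → Fin N → ℝ) → Fin d → Fin N → ℝ) (c ρ : ℝ)
    (v : Fin d → Fin N → ℝ) : Prop :=
  ∀ i l, F v i l - ρ * ∑ j ∈ Finset.univ.erase i, max (v j l - c - v i l) 0 = 0

variable {γ c ρ : ℝ} {F : (Fin d → Fin N → ℝ) → Fin d → Fin N → ℝ} {u v w : Fin d → Fin N → ℝ}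

namespace IsMonotoneSystem

variable (hF : IsMonotoneSystem γ F) (hγ : 0 < γ)
include hF

lemma add_le_apply_add_const {b : ℝ} (hb : 0 ≤ b) (i : Fin d) (l : Fin N) :
    F u i l + γ * b ≤ F (fun j k => u j k + b) i l := by
  have := hF (fun j k => u j k + b) u i l (fun j k => by simp) (by simpa using hb)
  simp only [add_sub_cancel_left] at this
  linarith

include hγ

lemma sub_le_of_forall_isMax {b : ℝ} (hb : 0 ≤ b)
    (h : ∀ i l, (∀ j k, u j k - v j k ≤ u i l - v i l) → b < u i l - v i l →
      F u i l - F v i l ≤ γ * b)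
    (i : Fin d) (l : Fin N) : u i l - v i l ≤ b := by
  by_contra! hlt
  have : Nonempty (Fin d × Fin N) := ⟨(i, l)⟩
  obtain ⟨p, hp⟩ := Finite.exists_max fun q : Fin d × Fin N => u q.1 q.2 - v q.1 q.2
  have hbp : b < u p.1 p.2 - v p.1 p.2 := hlt.trans_le (hp (i, l))
  have hmono := hF u v p.1 p.2 (fun j k => hp (j, k)) (hb.trans hbp.le)
  nlinarith [h p.1 p.2 (fun j k => hp (j, k)) hbp]

lemma neg_norm_div_le (hw : ∀ i l, 0 ≤ F w i l) (i : Fin d) (l : Fin N) :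
    -(‖F 0‖ / γ) ≤ w i l := by
  have := hF.sub_le_of_forall_isMax hγ (u := 0) (v := w) (b := ‖F 0‖ / γ) (by positivity)
    (fun i l _ _ => by
      rw [mul_div_cancel₀ _ hγ.ne']
      linarith [hw i l, (abs_le.1 (abs_apply_le_norm (F 0) i l)).2]) i l
  simp only [Pi.zero_apply, zero_sub] at this
  exact neg_le.2 this

end IsMonotoneSystem

namespace IsQVISolution

variable (hu : IsQVISolution F c u)
include hu

lemma apply_nonneg (i : Fin d) (l : Fin N) : 0 ≤ F u i l :=
  hu i l ▸ min_le_left _ _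

lemma Mop_le (i : Fin d) (l : Fin N) : Mop c u i l ≤ u i l :=
  sub_nonneg.1 (hu i l ▸ min_le_right _ _)

lemma apply_eq_zero_or_eq_Mop (i : Fin d) (l : Fin N) : F u i l = 0 ∨ u i l = Mop c u i l := by
  rcases min_eq_iff.1 (hu i l) with ⟨h, -⟩ | ⟨h, -⟩
  · exact Or.inl h
  · exact Or.inr (sub_eq_zero.1 h)

variable [Nontrivial (Fin d)] (hF : IsMonotoneSystem γ F) (hγ : 0 < γ) (hc : 0 < c)
include hF hγ hc

/-- At a maximum of `u` every switch loses `c > 0`, so there `F u = 0`. -/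
lemma le_norm_div (i : Fin d) (l : Fin N) : u i l ≤ ‖F 0‖ / γ := by
  have := hF.sub_le_of_forall_isMax hγ (v := 0) (b := ‖F 0‖ / γ) (by positivity)
    (fun i l hmax _ => by
      obtain ⟨j, -, hj⟩ := exists_ne_Mop_eq (c := c) (u := u) (i := i) (l := l)
      have hFu : F u i l = 0 := (hu.apply_eq_zero_or_eq_Mop i l).resolve_right fun h => by
        have := hmax j l
        simp only [Pi.zero_apply, sub_zero] at this
        linarith only [this, h, hj, hc]
      rw [hFu, mul_div_cancel₀ _ hγ.ne']
      linarith [(abs_le.1 (abs_apply_le_norm (F 0) i l)).1]) i l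
  simpa using this

lemma abs_le_norm_div (i : Fin d) (l : Fin N) : |u i l| ≤ ‖F 0‖ / γ :=
  abs_le.2 ⟨hF.neg_norm_div_le hγ hu.apply_nonneg i l, hu.le_norm_div hF hγ hc i l⟩

/-- Among the maximum points of `u - w` take one where `u` is largest; if `F u > 0` there, the
optimal switch leads to another maximum point with larger `u`. -/
lemma le_of_supersolution (hw : ∀ i l, 0 ≤ F w i l) (hobs : ∀ i j l, w j l - c ≤ w i l)
    (i : Fin d) (l : Fin N) : u i l ≤ w i l := by
  by_contra! hlt
  have : Nonempty (Fin d × Fin N) := ⟨(i, l)⟩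
  obtain ⟨p, hp⟩ := Finite.exists_max fun q : Fin d × Fin N => u q.1 q.2 - w q.1 q.2
  set m := u p.1 p.2 - w p.1 p.2
  obtain ⟨j, hj, hjmax⟩ := Finset.exists_max_image {j | u j p.2 - w j p.2 = m} (u · p.2)
    ⟨p.1, by simp [m]⟩
  simp only [Finset.mem_filter, Finset.mem_univ, true_and] at hj hjmax
  have hm : 0 < m := by linarith [hp (i, l)]
  have hFu : 0 < F u j p.2 := by
    have := hF u w j p.2 (fun k k' => hj ▸ hp (k, k')) (hj ▸ hm.le)
    nlinarith [hw j p.2]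
  obtain ⟨j', -, hj'⟩ := exists_ne_Mop_eq (c := c) (u := u) (i := j) (l := p.2)
  have hswitch : u j' p.2 = u j p.2 + c := by
    linarith [(hu.apply_eq_zero_or_eq_Mop j p.2).resolve_left hFu.ne']
  have hj'max : u j' p.2 - w j' p.2 = m :=
    le_antisymm (hp (j', p.2)) (by linarith [hobs j j' p.2])
  linarith [hjmax j' hj'max]

/-- `w := v i + D + a` is a supersolution: it lies within `2 D` of `v + a`, where `F` exceeds
`F v ≥ 0` by at least `γ a = 2 L D`. -/
lemma le_add_of_lipschitzOnWith (hv : ∀ i l, 0 ≤ F v i l) {R D : ℝ} {L : ℝ≥0}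
    (hL : LipschitzOnWith L F (closedBall 0 (R + 2))) (hvR : ∀ i l, |v i l| ≤ R)
    (hspread : ∀ i j l, v j l ≤ v i l + D) (hD : (1 + 2 * L / γ) * D ≤ 1)
    (i : Fin d) (l : Fin N) : u i l ≤ v i l + (1 + 2 * L / γ) * D := by
  have hD0 : 0 ≤ D := by linarith [hspread i i l]
  set a := 2 * L * D / γ
  have ha0 : 0 ≤ a := by positivity
  have hγa : γ * a = 2 * L * D := mul_div_cancel₀ _ hγ.ne'
  have hDa : D + a = (1 + 2 * L / γ) * D := by simp only [a]; ring
  set w : Fin d → Fin N → ℝ := fun _ k => v i k + D + a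
  set va : Fin d → Fin N → ℝ := fun j k => v j k + a
  have hR : 0 ≤ R := (abs_nonneg _).trans (hvR i l)
  have hw : w ∈ closedBall 0 (R + 2) := mem_closedBall_zero_iff.2 <|
    norm_le_of_forall_abs_le (by positivity) fun _ k => by
      simp only [w, abs_le] at hvR ⊢
      constructor <;> linarith [hvR i k]
  have hva : va ∈ closedBall 0 (R + 2) := mem_closedBall_zero_iff.2 <|
    norm_le_of_forall_abs_le (by positivity) fun j k => by
      simp only [va, abs_le] at hvR ⊢
      constructor <;> linarith [hvR j k]
  have hdist : dist w va ≤ 2 * D := by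
    rw [dist_eq_norm]
    refine norm_le_of_forall_abs_le (by positivity) fun j k => ?_
    simp only [w, va, Pi.sub_apply, abs_le]
    constructor <;> linarith [hspread i j k, hspread j i k]
  have hFw : ∀ j k, 0 ≤ F w j k := by
    intro j k
    have hclose : |F w j k - F va j k| ≤ 2 * L * D := calc
      |F w j k - F va j k| ≤ dist (F w) (F va) :=
        (abs_apply_le_norm (F w - F va) j k).trans_eq (dist_eq_norm _ _).symm
      _ ≤ L * dist w va := hL.dist_le_mul w hw va hva
      _ ≤ 2 * L * D := by nlinarith [L.2]
    linarith [(abs_le.1 hclose).1, hF.add_le_apply_add_const (u := v) ha0 j k, hv j k]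
  calc u i l ≤ w i l := hu.le_of_supersolution hF hγ hc hFw (fun _ _ _ => by linarith) i l
    _ = v i l + (1 + 2 * L / γ) * D := by rw [← hDa]; ring

end IsQVISolution

namespace IsPenalizedSolution

variable (hv : IsPenalizedSolution F c ρ v)
include hv

lemma apply_eq (i : Fin d) (l : Fin N) :
    F v i l = ρ * ∑ j ∈ Finset.univ.erase i, max (v j l - c - v i l) 0 :=
  sub_eq_zero.1 (hv i l)

lemma apply_nonneg (hρ : 0 ≤ ρ) (i : Fin d) (l : Fin N) : 0 ≤ F v i l :=
  hv.apply_eq i l ▸ mul_nonneg hρ (Finset.sum_nonneg fun _ _ => le_max_right _ _)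

lemma le_add_of_apply_le (hc : 0 ≤ c) (hρ : 0 < ρ) {K₁ : ℝ} (hK₁ : ∀ i l, F v i l ≤ K₁)
    (i j : Fin d) (l : Fin N) : v j l ≤ v i l + (c + K₁ / ρ) := by
  suffices ρ * (v j l - c - v i l) ≤ K₁ by
    rw [← le_div_iff₀' hρ] at this
    linarith
  refine le_trans ?_ (hK₁ i l)
  rcases eq_or_ne j i with rfl | hji
  · nlinarith [hv.apply_nonneg hρ.le j l]
  calc ρ * (v j l - c - v i l) ≤ ρ * max (v j l - c - v i l) 0 :=
        mul_le_mul_of_nonneg_left (le_max_left _ _) hρ.le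
    _ ≤ ρ * ∑ j ∈ Finset.univ.erase i, max (v j l - c - v i l) 0 :=
        mul_le_mul_of_nonneg_left (Finset.single_le_sum (f := fun k => max (v k l - c - v i l) 0)
          (fun _ _ => le_max_right _ _) (Finset.mem_erase.2 ⟨hji, Finset.mem_univ j⟩)) hρ.le
    _ = F v i l := (hv.apply_eq i l).symm

/-- At a positive maximum of `v - u` the penalty vanishes, because `u` satisfies the obstacle
constraint `M u ≤ u`. -/
lemma le_of_isQVISolution (hF : IsMonotoneSystem γ F) (hγ : 0 < γ)
    (hu : IsQVISolution F c u) (i : Fin d) (l : Fin N) : v i l ≤ u i l := by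
  refine sub_nonpos.1 (hF.sub_le_of_forall_isMax hγ le_rfl (fun i l hmax _ => ?_) i l)
  have hFv : F v i l = 0 := by
    rw [hv.apply_eq, Finset.sum_eq_zero, mul_zero]
    intro j hj
    have := (le_Mop (Finset.ne_of_mem_erase hj)).trans (hu.Mop_le i l)
    exact max_eq_right (by linarith [hmax j l])
  linarith [hu.apply_nonneg i l]

lemma abs_le_norm_div [Nontrivial (Fin d)] (hF : IsMonotoneSystem γ F) (hγ : 0 < γ) (hc : 0 < c)
    (hρ : 0 ≤ ρ) (hu : IsQVISolution F c u) (i : Fin d) (l : Fin N) : |v i l| ≤ ‖F 0‖ / γ :=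
  abs_le.2 ⟨hF.neg_norm_div_le hγ (hv.apply_nonneg hρ) i l,
    (hv.le_of_isQVISolution hF hγ hu i l).trans (abs_le.1 (hu.abs_le_norm_div hF hγ hc i l)).2⟩

end IsPenalizedSolution

lemma le_one_div_add_mul_of_le_one {c ρ : ℝ} (hc : 0 ≤ c) (hρ : 0 < ρ) (h : 1 / ρ + c * ρ ≤ 1) :
    c ≤ 1 / ρ + c * ρ := by
  have hq : 4 * c ≤ (1 / ρ + c * ρ) ^ 2 := by
    nlinarith [sq_nonneg (1 / ρ - c * ρ), one_div_mul_cancel hρ.ne']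
  have hq0 : 0 ≤ 1 / ρ + c * ρ := by positivity
  nlinarith [mul_le_mul_of_nonneg_left h hq0]

lemma IsQVISolution.sub_le_of_isPenalizedSolution [Nontrivial (Fin d)] (hF : IsMonotoneSystem γ F)
    (hγ : 0 < γ) (hc : 0 < c) (hρ : 0 < ρ) (hu : IsQVISolution F c u)
    (hv : IsPenalizedSolution F c ρ v) {K₁ : ℝ} (hK₁ : ∀ x ∈ closedBall 0 (‖F 0‖ / γ), ‖F x‖ ≤ K₁)
    {L : ℝ≥0} (hL : LipschitzOnWith L F (closedBall 0 (‖F 0‖ / γ + 2))) (i : Fin d) (l : Fin N) :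
    u i l - v i l ≤
      (1 + K₁) * (1 + 2 * L / γ) * (1 + 2 * (‖F 0‖ / γ)) * (1 / ρ + c * ρ) := by
  set K := ‖F 0‖ / γ
  set B := (1 + K₁) * (1 + 2 * L / γ)
  set q := 1 / ρ + c * ρ
  have hK : 0 ≤ K := by positivity
  have hvK := hv.abs_le_norm_div hF hγ hc hρ.le hu
  have hK₁0 : 0 ≤ K₁ := (norm_nonneg _).trans (hK₁ 0 (mem_closedBall_self hK))
  have hB : 1 ≤ B := one_le_mul_of_one_le_of_one_le (by linarith) (by simp; positivity)
  have hBqK : 0 ≤ B * q * K := by positivity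
  rcases le_or_gt q B⁻¹ with hq | hq
  · have hFv (i l) : F v i l ≤ K₁ := (le_abs_self _).trans <| (abs_apply_le_norm _ i l).trans <|
      hK₁ _ (mem_closedBall_zero_iff.2 (norm_le_of_forall_abs_le hK hvK))
    have hc1 : c ≤ q := le_one_div_add_mul_of_le_one hc.le hρ (hq.trans (inv_le_one_of_one_le₀ hB))
    have hK₁q : K₁ / ρ ≤ K₁ * q := by
      rw [div_eq_mul_one_div]
      exact mul_le_mul_of_nonneg_left (le_add_of_nonneg_right (by positivity)) hK₁0
    have hDB : (1 + 2 * L / γ) * (c + K₁ / ρ) ≤ B * q := by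
      rw [show B * q = (1 + 2 * L / γ) * ((1 + K₁) * q) by ring]
      exact mul_le_mul_of_nonneg_left (by linarith) (by positivity)
    have hBq : B * q ≤ 1 := by rwa [← le_div_iff₀' (by positivity), one_div]
    have := hu.le_add_of_lipschitzOnWith hF hγ hc (hv.apply_nonneg hρ.le) hL hvK
      (hv.le_add_of_apply_le hc.le hρ hFv) (hDB.trans hBq) i l
    nlinarith
  · have hBq : 1 < B * q := by rwa [← inv_lt_iff_one_lt_mul₀' (by positivity)]
    nlinarith [(abs_le.1 (hu.abs_le_norm_div hF hγ hc i l)).2, (abs_le.1 (hvK i l)).1]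

theorem penalty_error_uniform_small_cost_general {N d : ℕ} (hd : 2 ≤ d)
    (γ : ℝ) (hγ : 0 < γ)
    (F : (Fin d → Fin N → ℝ) → Fin d → Fin N → ℝ)
    (hFmono : IsMonotoneSystem γ F)
    (hFlip : LocallyLipschitz F)
    (U : ℝ → Fin d → Fin N → ℝ)
    (hU : ∀ c : ℝ, 0 < c → ∀ i l, min (F (U c) i l) (U c i l - Mop c (U c) i l) = 0)
    (V : ℝ → ℝ → Fin d → Fin N → ℝ)
    (hV : ∀ c ρ : ℝ, 0 < c → 0 < ρ → ∀ i l,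
      F (V c ρ) i l - ρ * ∑ j ∈ Finset.univ.erase i, max (V c ρ j l - c - V c ρ i l) 0 = 0) :
    ∃ C₁ : ℝ, 0 < C₁ ∧ ∀ c ρ : ℝ, 0 < c → 0 < ρ → ∀ i l,
      0 ≤ U c i l - V c ρ i l ∧ U c i l - V c ρ i l ≤ C₁ * (1 / ρ + c * ρ) := by
  have : Nontrivial (Fin d) := Fin.nontrivial_iff_two_le.2 hd
  replace hU : ∀ c, 0 < c → IsQVISolution F c (U c) := hU
  replace hV : ∀ c ρ, 0 < c → 0 < ρ → IsPenalizedSolution F c ρ (V c ρ) := hV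
  set K := ‖F 0‖ / γ
  obtain ⟨K₁, hK₁⟩ := (isCompact_closedBall (0 : Fin d → Fin N → ℝ) K).exists_bound_of_continuousOn
    hFlip.continuous.continuousOn
  have hK₁0 : 0 ≤ K₁ := (norm_nonneg _).trans (hK₁ 0 (mem_closedBall_self (by positivity)))
  obtain ⟨L, hL⟩ := LocallyLipschitzOn.exists_lipschitzOnWith_of_compact
    (isCompact_closedBall (0 : Fin d → Fin N → ℝ) (K + 2)) hFlip.locallyLipschitzOn
  refine ⟨(1 + K₁) * (1 + 2 * L / γ) * (1 + 2 * K), by positivity, fun c ρ hc hρ i l => ⟨?_, ?_⟩⟩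
  · exact sub_nonneg.2 ((hV c ρ hc hρ).le_of_isQVISolution hFmono hγ (hU c hc) i l)
  · exact (hU c hc).sub_le_of_isPenalizedSolution hFmono hγ hc hρ (hV c ρ hc hρ) hK₁ hL i l

/-- Uniform penalty error bound for small switching cost, for the penalty function
`π(y) = max(y, 0)` and locally Lipschitz `F`. -/
theorem penalty_error_uniform_small_cost {N d : ℕ} (hN : 1 ≤ N) (hd : 2 ≤ d)
    (γ : ℝ) (hγ : 0 < γ)
    (F : (Fin d → Fin N → ℝ) → Fin d → Fin N → ℝ)
    (hFcont : Continuous F) (hFmono : IsMonotoneSystem γ F)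
    (hFlip : LocallyLipschitz F)
    (U : ℝ → Fin d → Fin N → ℝ)
    (hU : ∀ c : ℝ, 0 < c → ∀ i l, min (F (U c) i l) (U c i l - Mop c (U c) i l) = 0)
    (V : ℝ → ℝ → Fin d → Fin N → ℝ)
    (hV : ∀ c ρ : ℝ, 0 < c → 0 < ρ → ∀ i l,
      F (V c ρ) i l - ρ * ∑ j ∈ Finset.univ.erase i, max (V c ρ j l - c - V c ρ i l) 0 = 0) :
    ∃ C₁ : ℝ, 0 < C₁ ∧ ∀ c ρ : ℝ, 0 < c → 0 < ρ → ∀ i l,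
      0 ≤ U c i l - V c ρ i l ∧ U c i l - V c ρ i l ≤ C₁ * (1 / ρ + c * ρ) :=
  penalty_error_uniform_small_cost_general hd γ hγ F hFmono hFlip U hU V hV
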